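/- (Decomposition of a multi-qubit controlled rotation, Fig. 3.) Fix n ≥ 1 and work with complex matrices over the index type (Fin n → Fin 2) × Fin 2, where the first component records the n control qubits and the second the target qubit. For a 2×2 matrix U, let Λ(U) denote the matrix mapping e_{(x,b)} to e_x ⊗ (U e_b) if x is the all-ones vector, and fixing e_{(x,b)} otherwise; and for φ ∈ ℝ let T(φ) denote the matrix applying R_y(φ) to the target qubit and the identity to all control qubits. Then for every real θ: Λ(R_y(θ)) = Λ(X) · T(−θ/2) · Λ(X) · T(θ/2), where X = [[0,1],[1,0]] and matrix products are composed so that the rightmost factor is applied first. -/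
import Mathlib


open Matrix

/-- `R_y(θ)`: the 2×2 rotation matrix `[[cos θ, −sin θ], [sin θ, cos θ]]` viewed over `ℂ`. -/
noncomputable def Ry (θ : ℝ) : Matrix (Fin 2) (Fin 2) ℂ :=
  !![(Real.cos θ : ℂ), -(Real.sin θ : ℂ); (Real.sin θ : ℂ), (Real.cos θ : ℂ)]

/-- `X = [[0,1],[1,0]]` (the NOT gate). -/
def Xgate : Matrix (Fin 2) (Fin 2) ℂ := !![0, 1; 1, 0]

/-- `Λ(U)`: the multi-qubit controlled gate over `(Fin n → Fin 2) × Fin 2` that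
applies `U` to the target qubit exactly when all `n` control qubits are `1`,
and acts as the identity otherwise. -/
def Lam (n : ℕ) (U : Matrix (Fin 2) (Fin 2) ℂ) :
    Matrix ((Fin n → Fin 2) × Fin 2) ((Fin n → Fin 2) × Fin 2) ℂ :=
  Matrix.of fun x y =>
    if x.1 = y.1 then
      (if ∀ i, y.1 i = 1 then U x.2 y.2 else if x.2 = y.2 then 1 else 0)
    else 0

/-- `T(φ)`: applies `R_y(φ)` to the target qubit and the identity to all controls. -/
noncomputable def Tgate (n : ℕ) (φ : ℝ) :
    Matrix ((Fin n → Fin 2) × Fin 2) ((Fin n → Fin 2) × Fin 2) ℂ :=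
  Matrix.of fun x y => if x.1 = y.1 then Ry φ x.2 y.2 else 0

/-- auxiliary: block-diagonal matrix over the control register -/
noncomputable def blockM (n : ℕ) (g : (Fin n → Fin 2) → Matrix (Fin 2) (Fin 2) ℂ) :
    Matrix ((Fin n → Fin 2) × Fin 2) ((Fin n → Fin 2) × Fin 2) ℂ :=
  Matrix.of fun x y => if x.1 = y.1 then g x.1 x.2 y.2 else 0

lemma blockM_mul (n : ℕ) (g h : (Fin n → Fin 2) → Matrix (Fin 2) (Fin 2) ℂ) :
    blockM n g * blockM n h = blockM n (fun c => g c * h c) := by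
  ext x y
  simp only [blockM, Matrix.mul_apply, Matrix.of_apply, Fintype.sum_prod_type]
  have key : ∀ c, (∑ b, (if x.1 = c then g x.1 x.2 b else 0) * (if c = y.1 then h c b y.2 else 0))
      = if x.1 = c then (if c = y.1 then ∑ b, g x.1 x.2 b * h c b y.2 else 0) else 0 := by
    intro c; split_ifs <;> simp
  rw [Finset.sum_congr rfl (fun c _ => key c), Finset.sum_ite_eq]
  simp [Matrix.mul_apply]

lemma Ry_mul (φ ψ : ℝ) : Ry φ * Ry ψ = Ry (φ + ψ) := by
  ext i j
  fin_cases i <;> fin_cases j <;>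
    simp [Ry, Matrix.mul_apply, Fin.sum_univ_two, Real.cos_add, Real.sin_add] <;>
    ring

lemma Ry_zero : Ry 0 = 1 := by
  ext i j
  fin_cases i <;> fin_cases j <;> simp [Ry, Matrix.one_apply]

lemma X_Ry_X (φ : ℝ) : Xgate * Ry φ * Xgate = Ry (-φ) := by
  ext i j
  fin_cases i <;> fin_cases j <;>
    simp [Xgate, Ry, Matrix.mul_apply, Fin.sum_univ_two]

lemma Lam_eq (n : ℕ) (U : Matrix (Fin 2) (Fin 2) ℂ) :
    Lam n U = blockM n (fun c => if ∀ i, c i = 1 then U else 1) := by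
  ext x y
  simp only [Lam, blockM, Matrix.of_apply]
  by_cases h : x.1 = y.1
  · simp only [h, if_true]
    split_ifs with h2 h3 <;> simp_all [Matrix.one_apply]
  · simp [h]

lemma Tgate_eq (n : ℕ) (φ : ℝ) : Tgate n φ = blockM n (fun _ => Ry φ) := rfl

/-- Decomposition of a multi-qubit controlled rotation (Fig. 3 of the paper):
`Λ(R_y(θ)) = Λ(X) · T(−θ/2) · Λ(X) · T(θ/2)` (the rightmost factor is applied first). -/
theorem multi_controlled_rotation_decomposition (n : ℕ) (hn : 1 ≤ n) (θ : ℝ) :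
    Lam n (Ry θ) = Lam n Xgate * Tgate n (-θ / 2) * Lam n Xgate * Tgate n (θ / 2) := by
  rw [Lam_eq, Lam_eq, Tgate_eq, Tgate_eq, blockM_mul, blockM_mul, blockM_mul]
  refine congrArg (blockM n) (funext fun c => ?_)
  by_cases h : ∀ i, c i = 1
  · simp only [if_pos h]
    rw [X_Ry_X, show -(-θ / 2) = θ / 2 by ring, Ry_mul,
      show θ / 2 + θ / 2 = θ by ring]
  · simp only [if_neg h]
    rw [mul_one, one_mul, Ry_mul,
      show -θ / 2 + θ / 2 = (0 : ℝ) by ring, Ry_zero]
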